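/- Let (V, ≺) be a finite linear order and u, v ∈ V with u ≺ v. Let E_fix be a set of edges over V with a page assignment σ_fix : E_fix → {1,…,ℓ} such that no two edges of E_fix assigned to the same page are in a nesting relation, and let E_add be a set of edges disjoint from E_fix, each having exactly one endpoint in {u, v} and the other endpoint in V \ {u, v}. Call the pair (E_fix ∪ E_add) solvable if there exists σ : E_fix ∪ E_add → {1,…,ℓ} with σ(e') = σ_fix(e') for all e' ∈ E_fix such that no two edges assigned to the same page are in a nesting relation. Suppose e = {v, x} ∈ E_add with u ≺ x and |P(e)| ≥ 2, where P(e) is the set of admissible pages of e with respect to ≺, E_fix and σ_fix. Then the instance with edge set E_fix ∪ E_add is solvable if and only if the instance with edge set E_fix ∪ (E_add \ {e}) is solvable. -/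
import Mathlib


/-- Two (unordered) edges are in a nesting relation with respect to the
linear order on `V`: there are `a ≺ b ≺ c ≺ d` such that one edge is `{a, d}`
and the other is `{b, c}`. -/
def Nests {V : Type*} [LinearOrder V] (e₁ e₂ : Sym2 V) : Prop :=
  ∃ a b c d : V, a < b ∧ b < c ∧ c < d ∧
    ((e₁ = s(a, d) ∧ e₂ = s(b, c)) ∨ (e₁ = s(b, c) ∧ e₂ = s(a, d)))

/-- The set of admissible pages of an edge `e` with respect to a set of
already placed edges `Efix` with page assignment `σfix`. -/
def admissiblePages {V : Type*} [LinearOrder V] {ℓ : ℕ} (Efix : Set (Sym2 V))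
    (σfix : Sym2 V → Fin ℓ) (e : Sym2 V) : Set (Fin ℓ) :=
  {p | ∀ e' ∈ Efix, σfix e' = p → ¬ Nests e e'}

/-- The instance with edge set `E` is solvable: there is a page assignment
agreeing with `σfix` on `Efix` such that no two edges of `E` assigned to the
same page are in a nesting relation. -/
def Solvable {V : Type*} [LinearOrder V] {ℓ : ℕ} (Efix : Set (Sym2 V))
    (σfix : Sym2 V → Fin ℓ) (E : Set (Sym2 V)) : Prop :=
  ∃ σ : Sym2 V → Fin ℓ, (∀ e ∈ Efix, σ e = σfix e) ∧
    ∀ e₁ ∈ E, ∀ e₂ ∈ E, σ e₁ = σ e₂ → ¬ Nests e₁ e₂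

lemma nests_comm {V : Type*} [LinearOrder V] {e₁ e₂ : Sym2 V} (h : Nests e₁ e₂) :
    Nests e₂ e₁ := by
  obtain ⟨a, b, c, d, h1, h2, h3, h4 | h4⟩ := h
  · exact ⟨a, b, c, d, h1, h2, h3, Or.inr ⟨h4.2, h4.1⟩⟩
  · exact ⟨a, b, c, d, h1, h2, h3, Or.inl ⟨h4.2, h4.1⟩⟩

/-- Destructor: normalized endpoints with the nesting relation. -/
lemma nests_parts {V : Type*} [LinearOrder V] {e₁ e₂ : Sym2 V} (h : Nests e₁ e₂) :
    ∃ a b c d : V, a < b ∧ c < d ∧ e₁ = s(a, b) ∧ e₂ = s(c, d) ∧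
      ((a < c ∧ d < b) ∨ (c < a ∧ b < d)) := by
  obtain ⟨a, b, c, d, h1, h2, h3, ⟨h4, h5⟩ | ⟨h4, h5⟩⟩ := h
  · exact ⟨a, d, b, c, h1.trans (h2.trans h3), h2, h4, h5, Or.inl ⟨h1, h3⟩⟩
  · exact ⟨b, c, a, d, h2, h1.trans (h2.trans h3), h4, h5, Or.inr ⟨h1, h3⟩⟩

lemma nests_intro₁ {V : Type*} [LinearOrder V] {a b c d : V}
    (h1 : a < c) (h2 : c < d) (h3 : d < b) : Nests s(a, b) s(c, d) :=
  ⟨a, c, d, b, h1, h2, h3, Or.inl ⟨rfl, rfl⟩⟩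

lemma nests_intro₂ {V : Type*} [LinearOrder V] {a b c d : V}
    (h1 : a < c) (h2 : c < d) (h3 : d < b) : Nests s(c, d) s(a, b) :=
  ⟨a, c, d, b, h1, h2, h3, Or.inr ⟨rfl, rfl⟩⟩

lemma nests_between {V : Type*} [LinearOrder V] {a b c d : V}
    (hab : a < b) (hcd : c < d) (h : Nests s(a, b) s(c, d)) :
    (a < c ∧ d < b) ∨ (c < a ∧ b < d) := by
  obtain ⟨a', b', c', d', ha', hc', e1, e2, hor⟩ := nests_parts h
  rcases Sym2.eq_iff.mp e1 with ⟨rfl, rfl⟩ | ⟨rfl, rfl⟩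
  · rcases Sym2.eq_iff.mp e2 with ⟨rfl, rfl⟩ | ⟨rfl, rfl⟩
    · exact hor
    · exact absurd hcd (lt_asymm hc')
  · exact absurd hab (lt_asymm ha')

lemma nests_disjoint {V : Type*} [LinearOrder V] {e₁ e₂ : Sym2 V} (h : Nests e₁ e₂)
    {y : V} (h₁ : y ∈ e₁) (h₂ : y ∈ e₂) : False := by
  obtain ⟨a, b, c, d, hab, hcd, rfl, rfl, hor⟩ := nests_parts h
  rw [Sym2.mem_iff] at h₁ h₂
  rcases hor with ⟨ho1, ho2⟩ | ⟨ho1, ho2⟩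
  · rcases h₁ with rfl | rfl
    · rcases h₂ with rfl | rfl
      · exact lt_irrefl _ ho1
      · exact lt_irrefl _ (ho1.trans hcd)
    · rcases h₂ with rfl | rfl
      · exact lt_irrefl _ (hcd.trans ho2)
      · exact lt_irrefl _ ho2
  · rcases h₁ with rfl | rfl
    · rcases h₂ with rfl | rfl
      · exact lt_irrefl _ ho1
      · exact lt_irrefl _ (hab.trans ho2)
    · rcases h₂ with rfl | rfl
      · exact lt_irrefl _ (ho1.trans hab)
      · exact lt_irrefl _ ho2

lemma not_nests_self {V : Type*} [LinearOrder V] (e : Sym2 V) : ¬ Nests e e := by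
  intro h
  obtain ⟨a, b, c, d, hab, hcd, rfl, e2, hor⟩ := nests_parts h
  exact nests_disjoint h (Sym2.mem_mk_left a b) (Sym2.mem_mk_left a b)

/-- Two missing vertices `u ≺ v`, all new edges having exactly one endpoint
in `{u, v}`: a new edge `{v, x}` with `u ≺ x` and at least two admissible
pages can be removed without affecting solvability. -/
theorem stmt8 {V : Type*} [Fintype V] [LinearOrder V] {ℓ : ℕ}
    (u v : V) (huv : u < v)
    (Efix Eadd : Set (Sym2 V)) (hdisj : Disjoint Efix Eadd)
    (σfix : Sym2 V → Fin ℓ)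
    (hfix : ∀ e₁ ∈ Efix, ∀ e₂ ∈ Efix, σfix e₁ = σfix e₂ → ¬ Nests e₁ e₂)
    (hadd : ∀ e ∈ Eadd, ∃ w : V, w ≠ u ∧ w ≠ v ∧ (e = s(u, w) ∨ e = s(v, w)))
    (x : V) (hx : u < x) (hex : s(v, x) ∈ Eadd)
    (hP : 2 ≤ (admissiblePages Efix σfix s(v, x)).ncard) :
    Solvable Efix σfix (Efix ∪ Eadd) ↔
      Solvable Efix σfix (Efix ∪ (Eadd \ {s(v, x)})) := by
  classical
  have memE : ∀ h : Sym2 V, h ∈ Efix ∪ (Eadd \ {s(v, x)}) → h ∈ Efix ∪ Eadd :=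
    fun h hh => hh.imp id (fun h' => h'.1)
  constructor
  · rintro ⟨σ, h1, h2⟩
    exact ⟨σ, h1, fun e₁ he₁ e₂ he₂ => h2 e₁ (memE e₁ he₁) e₂ (memE e₂ he₂)⟩
  rintro ⟨σ, hagree, hσ⟩
  -- basic facts
  have hxv : x ≠ v := by
    obtain ⟨w, hwu, hwv, hc | hc⟩ := hadd _ hex
    · rcases Sym2.eq_iff.mp hc with ⟨h1, h2⟩ | ⟨h1, h2⟩
      · exact absurd h1 huv.ne'
      · exact absurd h2 hx.ne'
    · rcases Sym2.eq_iff.mp hc with ⟨h1, h2⟩ | ⟨h1, h2⟩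
      · exact h2 ▸ hwv
      · exact absurd h1.symm hwv
  set m := min v x with hmdef
  set M := max v x with hMdef
  have hum : u < m := lt_min huv hx
  have hm : m < M := min_lt_max.mpr hxv.symm
  have he : s(v, x) = s(m, M) := by
    rcases le_total v x with h | h
    · rw [hmdef, hMdef, min_eq_left h, max_eq_right h]
    · rw [hmdef, hMdef, min_eq_right h, max_eq_left h]; exact Sym2.eq_swap
  have memE' : ∀ h : Sym2 V, h ∈ Efix ∪ Eadd → h ≠ s(v, x) →
      h ∈ Efix ∪ (Eadd \ {s(v, x)}) :=
    fun h hh hne => hh.imp id (fun h' => ⟨h', hne⟩)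
  -- structure of added edges nesting s(v,x)
  have K1 : ∀ h ∈ Eadd, Nests s(v, x) h → ∃ w, M < w ∧ h = s(u, w) := by
    intro h hh hn
    obtain ⟨c, hcu, hcv, hc | hc⟩ := hadd h hh
    · subst hc
      rcases lt_trichotomy c u with h' | h' | h'
      · exfalso
        rw [he, show s(u, c) = s(c, u) from Sym2.eq_swap] at hn
        rcases nests_between hm h' hn with ⟨h1, h2⟩ | ⟨h1, h2⟩
        · exact lt_irrefl _ (h1.trans (h'.trans hum))
        · exact lt_irrefl _ (hum.trans (hm.trans h2))
      · exact absurd h' hcu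
      · rw [he] at hn
        rcases nests_between hm h' hn with ⟨h1, h2⟩ | ⟨h1, h2⟩
        · exact absurd h1 (lt_asymm hum)
        · exact ⟨c, h2, rfl⟩
    · exact absurd (hc ▸ Sym2.mem_mk_left v c) (fun h2 => nests_disjoint hn (Sym2.mem_mk_left v x) h2)
  -- admissibility transfer to σ
  have hadm : ∀ p ∈ admissiblePages Efix σfix s(v, x), ∀ h ∈ Efix, σ h = p →
      ¬ Nests s(v, x) h := by
    intro p hp h hh hph
    exact hp h hh (by rw [← hagree h hh]; exact hph)
  -- the two admissible pages
  obtain ⟨p₁, p₂, hp₁, hp₂, hpne⟩ :=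
    (Set.one_lt_ncard_iff (Set.toFinite _)).mp
      (show 1 < (admissiblePages Efix σfix s(v, x)).ncard by omega)
  set W : Set V := {w | M < w ∧ s(u, w) ∈ Eadd ∧ σ s(u, w) ∈ ({p₁, p₂} : Set (Fin ℓ)) ∧
    Nests s(v, x) s(u, w)} with hWdef
  by_cases hW : W.Nonempty
  · -- blocked case: move all blocking edges onto the page of the largest one
    obtain ⟨w', hw'W, hmax⟩ := Set.exists_max_image W id (Set.toFinite W) hW
    obtain ⟨hMw', hEw', hpw', hnw'⟩ := hw'W
    have huw' : u < w' := hum.trans (hm.trans hMw')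
    have hfne : s(u, w') ≠ s(v, x) := by
      intro hE
      rcases Sym2.eq_iff.mp hE with ⟨h1, h2⟩ | ⟨h1, h2⟩
      · exact huv.ne h1
      · exact hx.ne h1
    have hfmem : s(u, w') ∈ Efix ∪ (Eadd \ {s(v, x)}) := Or.inr ⟨hEw', hfne⟩
    have hp_adm : σ s(u, w') ∈ admissiblePages Efix σfix s(v, x) := by
      rcases hpw' with h | h
      · rw [h]; exact hp₁
      · rw [Set.mem_singleton_iff.mp h]; exact hp₂
    obtain ⟨q, hqne, hqadm, hqmem⟩ :
        ∃ q, q ≠ σ s(u, w') ∧ q ∈ admissiblePages Efix σfix s(v, x) ∧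
          q ∈ ({p₁, p₂} : Set (Fin ℓ)) := by
      by_cases h : σ s(u, w') = p₁
      · exact ⟨p₂, by rw [h]; exact hpne.symm, hp₂, Or.inr rfl⟩
      · exact ⟨p₁, fun hEq => h hEq.symm, hp₁, Or.inl rfl⟩
    set Q : Sym2 V → Prop := fun h =>
      h ∈ Eadd ∧ σ h ∈ ({p₁, p₂} : Set (Fin ℓ)) ∧ Nests s(v, x) h with hQdef
    have hQw : ∀ h, Q h → ∃ w, M < w ∧ w ≤ w' ∧ h = s(u, w) := by
      rintro h ⟨hh1, hh2, hh3⟩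
      obtain ⟨w, hMw, rfl⟩ := K1 h hh1 hh3
      exact ⟨w, hMw, hmax w ⟨hMw, hh1, hh2, hh3⟩, rfl⟩
    -- Claim B : nothing left on page q nests s(v,x)
    have claimB : ∀ h ∈ Efix ∪ Eadd, ¬ Q h → σ h = q → ¬ Nests s(v, x) h := by
      intro h hh hQh hph hn
      rcases hh with hh | hh
      · exact hadm q hqadm h hh hph hn
      · exact hQh ⟨hh, by rw [hph]; exact hqmem, hn⟩
    -- Claim A : moved edges cause no conflict on the target page
    have claimA : ∀ h₂, Q h₂ → ∀ h ∈ Efix ∪ Eadd, h ≠ s(v, x) → σ h = σ s(u, w') →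
        ¬ Nests h₂ h := by
      intro h₂ hQ2 h hh hhe hph hn
      obtain ⟨w₂, hMw₂, hw₂le, rfl⟩ := hQw h₂ hQ2
      have huw₂ : u < w₂ := hum.trans (hm.trans hMw₂)
      obtain ⟨a, b, c, d, hab, hcd, h2eq, heq2, hor⟩ := nests_parts hn
      rcases Sym2.eq_iff.mp h2eq with ⟨rfl, rfl⟩ | ⟨rfl, rfl⟩
      swap
      · exact absurd hab (lt_asymm huw₂)
      rcases hor with ⟨ho1, ho2⟩ | ⟨ho1, ho2⟩
      · -- h = s(c,d) strictly inside s(u,w₂)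
        rcases eq_or_lt_of_le hw₂le with rfl | hlt
        · exact hσ s(u, w₂) hfmem h (memE' h hh hhe) hph.symm (heq2 ▸ hn)
        · have hn' : Nests s(u, w') s(c, d) := nests_intro₁ ho1 hcd (ho2.trans hlt)
          exact hσ s(u, w') hfmem h (memE' h hh hhe) hph.symm (heq2 ▸ hn')
      · -- h strictly contains s(u,w₂), hence contains s(v,x)
        have hnvx : Nests s(v, x) s(c, d) := by
          rw [he]
          exact nests_intro₂ (ho1.trans hum) hm (hMw₂.trans ho2)
        rcases hh with hhf | hha
        · exact hadm (σ s(u, w')) hp_adm h hhf hph (heq2 ▸ hnvx)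
        · obtain ⟨w, hMw, hEq⟩ := K1 h hha (heq2 ▸ hnvx)
          rw [heq2] at hEq
          rcases Sym2.eq_iff.mp hEq with ⟨h1, h2⟩ | ⟨h1, h2⟩
          · exact lt_irrefl _ (h1 ▸ ho1)
          · exact lt_irrefl _ ((huw₂.trans ho2).trans_eq h2)
    refine ⟨fun h => if h = s(v, x) then q else if Q h then σ s(u, w') else σ h, ?_, ?_⟩
    · intro h hh
      have h1 : h ≠ s(v, x) := fun hhe => Set.disjoint_left.mp hdisj hh (hhe ▸ hex)
      have h2 : ¬ Q h := fun hQ => Set.disjoint_left.mp hdisj hh hQ.1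
      simp only [if_neg h1, if_neg h2]
      exact hagree h hh
    · intro h₁ hh₁ h₂ hh₂ heq hn
      by_cases h₁e : h₁ = s(v, x) <;> by_cases h₂e : h₂ = s(v, x)
      · subst h₁e; subst h₂e; exact not_nests_self _ hn
      · subst h₁e
        simp only [if_pos rfl, if_neg h₂e] at heq
        by_cases hQ₂ : Q h₂
        · rw [if_pos hQ₂] at heq; exact hqne heq
        · rw [if_neg hQ₂] at heq; exact claimB h₂ hh₂ hQ₂ heq.symm hn
      · subst h₂e
        simp only [if_pos rfl, if_neg h₁e] at heq
        by_cases hQ₁ : Q h₁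
        · rw [if_pos hQ₁] at heq; exact hqne heq.symm
        · rw [if_neg hQ₁] at heq; exact claimB h₁ hh₁ hQ₁ heq (nests_comm hn)
      · simp only [if_neg h₁e, if_neg h₂e] at heq
        by_cases hQ₁ : Q h₁ <;> by_cases hQ₂ : Q h₂
        · obtain ⟨w₁, hMw₁, _, rfl⟩ := hQw h₁ hQ₁
          obtain ⟨w₂, hMw₂, _, rfl⟩ := hQw h₂ hQ₂
          rcases nests_between (hum.trans (hm.trans hMw₁)) (hum.trans (hm.trans hMw₂)) hn
            with ⟨h1, _⟩ | ⟨h1, _⟩ <;> exact lt_irrefl _ h1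
        · rw [if_pos hQ₁, if_neg hQ₂] at heq
          exact claimA h₁ hQ₁ h₂ hh₂ h₂e heq.symm hn
        · rw [if_neg hQ₁, if_pos hQ₂] at heq
          exact claimA h₂ hQ₂ h₁ hh₁ h₁e heq (nests_comm hn)
        · rw [if_neg hQ₁, if_neg hQ₂] at heq
          exact hσ h₁ (memE' h₁ hh₁ h₁e) h₂ (memE' h₂ hh₂ h₂e) heq hn
  · -- unblocked case : just put s(v,x) on page p₁
    have claimB0 : ∀ h ∈ Efix ∪ Eadd, σ h = p₁ → ¬ Nests s(v, x) h := by
      intro h hh hph hn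
      rcases hh with hh | hh
      · exact hadm p₁ hp₁ h hh hph hn
      · obtain ⟨w, hMw, rfl⟩ := K1 h hh hn
        exact hW ⟨w, hMw, hh, by rw [hph]; exact Or.inl rfl, hn⟩
    refine ⟨fun h => if h = s(v, x) then p₁ else σ h, ?_, ?_⟩
    · intro h hh
      have h1 : h ≠ s(v, x) := fun hhe => Set.disjoint_left.mp hdisj hh (hhe ▸ hex)
      simp only [if_neg h1]
      exact hagree h hh
    · intro h₁ hh₁ h₂ hh₂ heq hn
      by_cases h₁e : h₁ = s(v, x) <;> by_cases h₂e : h₂ = s(v, x)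
      · subst h₁e; subst h₂e; exact not_nests_self _ hn
      · subst h₁e
        simp only [if_pos rfl, if_neg h₂e] at heq
        exact claimB0 h₂ hh₂ heq.symm hn
      · subst h₂e
        simp only [if_pos rfl, if_neg h₁e] at heq
        exact claimB0 h₁ hh₁ heq (nests_comm hn)
      · simp only [if_neg h₁e, if_neg h₂e] at heq
        exact hσ h₁ (memE' h₁ hh₁ h₁e) h₂ (memE' h₂ hh₂ h₂e) heq hn
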